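/- Let $n\ge 2$ and $0\le k\le n$ be integers, $h\in\mathbb{R}$, $c>0$, and let $g:(a_1,a_2)\to\mathbb{R}$ be positive, differentiable with $g'(t)\ne 0$ and $(g'(t))^2 = c - g(t)^2\,(h+g(t)^{-n})^2$ for all $t$. Set $\lambda = h+g^{-n}$, $r = g/\sqrt{c}$, fix $t_0\in(a_1,a_2)$ and let $R(t)=\int_{t_0}^t r(\tau)\lambda(\tau)\,d\tau$. Let $e_{n+1}=(0,\dots,0,1)\in\mathbb{R}^{n+1}$. Then $(r')^2 + r^2\lambda^2 = 1$ on $(a_1,a_2)$, and for every $y\in\mathbb{R}^{n+1}$ with $y_{n+1}=0$ and $\langle y,y\rangle = 1$, the curves $\phi(u) = r(u)\,y + R(u)\,e_{n+1}$ and $\nu(u) = -r(u)\lambda(u)\,y + r'(u)\,e_{n+1}$ satisfy: $\langle\phi',\phi'\rangle\equiv 1$, $\langle\nu,\nu\rangle\equiv 1$, $\langle\nu,\phi'\rangle\equiv 0$, $\langle\nu(u),v\rangle = 0$ for every $v\in\mathbb{R}^{n+1}$ with $v_{n+1}=0$ and $\langle v,y\rangle = 0$, and $\nu'(u) = -(nh-(n-1)\lambda(u))\,\phi'(u)$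 for all $u$. -/

import Mathlib

/-!
Write `ρ = rλ` and `μ = nh - (n-1)λ`. Since `gλ = hg + g^{1-n}`, one has `(gλ)' = μ g'`, hence
`ρ' = μ r'`, and the ODE for `g` reads `r'² + ρ² = 1`. By Darboux `r'` has a fixed sign, so
`r' = ±√(1 - ρ²)` is differentiable with `r'' = -μρ`. In the orthonormal pair `(y, e)` we have
`φ' = r' y + ρ e` and `ν = -ρ y + r' e`; all the inner products reduce to `r'² + ρ² = 1`, and
`ν' = -μ (r' y + ρ e) = -μ φ'`.
-/

/-- The semi-riemannian bilinear form of index `k` on `ℝ^m`: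
`⟨v,w⟩ = -v₁w₁ - ⋯ - v_k w_k + v_{k+1} w_{k+1} + ⋯ + v_m w_m`
(coordinates are 0-indexed in Lean, so the first `k` indices carry sign `-1`). -/
noncomputable def semiForm (k : ℕ) {m : ℕ} (v w : Fin m → ℝ) : ℝ :=
  ∑ i : Fin m, (if (i : ℕ) < k then (-1 : ℝ) else 1) * v i * w i

open Set

section SemiForm

variable {k m : ℕ}

lemma semiForm_comm (v w : Fin m → ℝ) : semiForm k v w = semiForm k w v :=
  Finset.sum_congr rfl fun _ _ => by ring

lemma semiForm_add_left (u v w : Fin m → ℝ) :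
    semiForm k (u + v) w = semiForm k u w + semiForm k v w := by
  simp only [semiForm, ← Finset.sum_add_distrib, Pi.add_apply]
  exact Finset.sum_congr rfl fun _ _ => by ring

lemma semiForm_smul_left (a : ℝ) (v w : Fin m → ℝ) :
    semiForm k (a • v) w = a * semiForm k v w := by
  simp only [semiForm, Finset.mul_sum, Pi.smul_apply, smul_eq_mul]
  exact Finset.sum_congr rfl fun _ _ => by ring

lemma semiForm_add_right (u v w : Fin m → ℝ) :
    semiForm k u (v + w) = semiForm k u v + semiForm k u w := by
  rw [semiForm_comm, semiForm_add_left, semiForm_comm v, semiForm_comm w]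

lemma semiForm_smul_right (a : ℝ) (v w : Fin m → ℝ) :
    semiForm k v (a • w) = a * semiForm k v w := by
  rw [semiForm_comm, semiForm_smul_left, semiForm_comm]

lemma semiForm_single_right (v : Fin m → ℝ) (i : Fin m) (a : ℝ) :
    semiForm k v (Pi.single i a) = (if (i : ℕ) < k then -1 else 1) * v i * a := by
  rw [semiForm, Finset.sum_eq_single i (fun j _ hj => by simp [hj]) (by simp)]
  simp

lemma semiForm_smul_add_smul (y e : Fin m → ℝ) (hye : semiForm k y e = 0)
    (hee : semiForm k e e = 1) (a b a' b' : ℝ) :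
    semiForm k (a • y + b • e) (a' • y + b' • e) = a * a' * semiForm k y y + b * b' := by
  simp only [semiForm_add_left, semiForm_add_right, semiForm_smul_left, semiForm_smul_right,
    semiForm_comm e y, hye, hee]
  ring

end SemiForm

lemma HasDerivAt.mul_const_add_zpow_neg {g : ℝ → ℝ} {g' t : ℝ} (n : ℕ) (h : ℝ)
    (hg : HasDerivAt g g' t) (hgt : g t ≠ 0) :
    HasDerivAt (fun t => g t * (h + g t ^ (-(n : ℤ))))
      ((n * h - (n - 1) * (h + g t ^ (-(n : ℤ)))) * g') t := by
  have hpow := (hasDerivAt_zpow (-(n : ℤ)) (g t) (Or.inl hgt)).comp t hg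
  refine (hg.mul (hpow.const_add h)).congr_deriv ?_
  have : g t * g t ^ (-(n : ℤ) - 1) = g t ^ (-(n : ℤ)) := by
    rw [zpow_sub_one₀ hgt]; field_simp
  simp only [Function.comp_apply]
  push_cast
  linear_combination (-(n : ℝ) * g') * this

lemma hasDerivAt_deriv_of_deriv_sq_eq {f Q : ℝ → ℝ} {s : Set ℝ} {x Q' : ℝ}
    (hs : Convex ℝ s) (hso : IsOpen s) (hf : ∀ t ∈ s, DifferentiableAt ℝ f t)
    (hf' : ∀ t ∈ s, deriv f t ≠ 0) (hsq : ∀ t ∈ s, deriv f t ^ 2 = Q t)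
    (hx : x ∈ s) (hQ : HasDerivAt Q Q' x) :
    HasDerivAt (deriv f) (Q' / (2 * deriv f x)) x := by
  have hQx : 0 < Q x := hsq x hx ▸ pow_two_pos_of_ne_zero (hf' x hx)
  -- By Darboux, `f'` has constant sign `σ` on `s`, hence equals `σ √Q` there.
  suffices key : ∀ σ : ℝ, σ ^ 2 = 1 → (∀ t ∈ s, deriv f t = σ * √(Q t)) →
      HasDerivAt (deriv f) (Q' / (2 * deriv f x)) x by
    have hsqrt : ∀ t ∈ s, √(Q t) = |deriv f t| := fun t ht => by
      rw [← hsq t ht, Real.sqrt_sq_eq_abs]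
    rcases hasDerivWithinAt_forall_lt_or_forall_gt_of_forall_ne hs
      (fun t ht => (hf t ht).hasDerivAt.hasDerivWithinAt) hf' with hneg | hpos
    · exact key (-1) (by norm_num) fun t ht => by rw [hsqrt t ht, abs_of_neg (hneg t ht)]; ring
    · exact key 1 (by norm_num) fun t ht => by rw [hsqrt t ht, abs_of_pos (hpos t ht)]; ring
  intro σ hσ hfσ
  have hderiv := ((hQ.sqrt hQx.ne').const_mul σ).congr_of_eventuallyEq
    (Filter.eventuallyEq_of_mem (hso.mem_nhds hx) hfσ)
  refine hderiv.congr_deriv ?_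
  rw [hfσ x hx]
  have : √(Q x) ≠ 0 := (Real.sqrt_pos.2 hQx).ne'
  have hσ0 : σ ≠ 0 := by rintro rfl; norm_num at hσ
  field_simp
  linear_combination Q' * hσ

lemma hasDerivAt_integral_of_continuousAt {f : ℝ → ℝ} {a b t₀ u : ℝ}
    (hf : ∀ t ∈ Ioo a b, ContinuousAt f t) (ht₀ : t₀ ∈ Ioo a b) (hu : u ∈ Ioo a b) :
    HasDerivAt (fun t => ∫ τ in t₀..t, f τ) (f u) u :=
  intervalIntegral.integral_hasDerivAt_right
    (ContinuousOn.intervalIntegrable fun t ht =>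
      (hf t (ordConnected_Ioo.uIcc_subset ht₀ hu ht)).continuousWithinAt)
    (ContinuousAt.stronglyMeasurableAtFilter isOpen_Ioo hf u hu) (hf u hu)

section Profile

variable {c : ℝ} {g r : ℝ → ℝ}

lemma deriv_eq_of_eq_div_sqrt (hr : ∀ t, r t = g t / √c) (t : ℝ) :
    deriv r t = deriv g t / √c := by
  rw [funext hr]; exact deriv_div_const _

lemma deriv_sq_add_sq_eq_one_of_eq_div_sqrt (hc : 0 < c) (hr : ∀ t, r t = g t / √c) {t L : ℝ}
    (hode : deriv g t ^ 2 = c - g t ^ 2 * L ^ 2) : deriv r t ^ 2 + (r t * L) ^ 2 = 1 := by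
  have : √c ≠ 0 := (Real.sqrt_pos.2 hc).ne'
  rw [deriv_eq_of_eq_div_sqrt hr, hr, div_pow, mul_pow, div_pow, Real.sq_sqrt hc.le, hode]
  field_simp
  ring

lemma hasDerivAt_mul_of_eq_div_sqrt (n : ℕ) {h t : ℝ} {lam : ℝ → ℝ}
    (hr : ∀ t, r t = g t / √c) (hlam : ∀ t, lam t = h + g t ^ (-(n : ℤ)))
    (hg : DifferentiableAt ℝ g t) (hgt : g t ≠ 0) :
    HasDerivAt (fun t => r t * lam t) ((n * h - (n - 1) * lam t) * deriv r t) t := by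
  have hfun : (fun t => r t * lam t) = fun t => g t * (h + g t ^ (-(n : ℤ))) / √c :=
    funext fun t => by rw [hr, hlam]; ring
  rw [hfun, deriv_eq_of_eq_div_sqrt hr, hlam]
  exact ((hg.hasDerivAt.mul_const_add_zpow_neg n h hgt).div_const √c).congr_deriv (by ring)

end Profile

lemma hasDerivAt_deriv_of_deriv_sq_add_sq {r ρ : ℝ → ℝ} {a b u μ : ℝ}
    (hr : ∀ t ∈ Ioo a b, DifferentiableAt ℝ r t) (hr' : ∀ t ∈ Ioo a b, deriv r t ≠ 0)
    (hunit : ∀ t ∈ Ioo a b, deriv r t ^ 2 + ρ t ^ 2 = 1)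
    (hρ : HasDerivAt ρ (μ * deriv r u) u) (hu : u ∈ Ioo a b) :
    HasDerivAt (deriv r) (-(μ * ρ u)) u :=
  (hasDerivAt_deriv_of_deriv_sq_eq (Q := fun t => 1 - ρ t ^ 2) (convex_Ioo a b) isOpen_Ioo hr hr'
    (fun t ht => by linear_combination hunit t ht) hu ((hρ.pow 2).const_sub 1)).congr_deriv
    (by field_simp [hr' u hu]; ring)

lemma profileCurve_frame {k m : ℕ} {y e : Fin m → ℝ} (hyy : semiForm k y y = 1)
    (hye : semiForm k y e = 0) (hee : semiForm k e e = 1) {r R ρ : ℝ → ℝ} {u μ : ℝ}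
    (hr : HasDerivAt r (deriv r u) u) (hR : HasDerivAt R (ρ u) u)
    (hρ : HasDerivAt ρ (μ * deriv r u) u) (hr' : HasDerivAt (deriv r) (-(μ * ρ u)) u)
    (hunit : deriv r u ^ 2 + ρ u ^ 2 = 1) {φ ν : ℝ → Fin m → ℝ}
    (hφ : ∀ t, φ t = r t • y + R t • e) (hν : ∀ t, ν t = (-ρ t) • y + deriv r t • e) :
    semiForm k (deriv φ u) (deriv φ u) = 1 ∧ semiForm k (ν u) (ν u) = 1 ∧
      semiForm k (ν u) (deriv φ u) = 0 ∧
      (∀ v, semiForm k v e = 0 → semiForm k v y = 0 → semiForm k (ν u) v = 0) ∧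
      deriv ν u = (-μ) • deriv φ u := by
  have hφ' : deriv φ u = deriv r u • y + ρ u • e := by
    rw [funext hφ]; exact ((hr.smul_const y).add (hR.smul_const e)).deriv
  have hν' : deriv ν u = (-(μ * deriv r u)) • y + (-(μ * ρ u)) • e := by
    rw [funext hν]; exact ((hρ.neg.smul_const y).add (hr'.smul_const e)).deriv
  refine ⟨?_, ?_, ?_, fun v hve hvy => ?_, ?_⟩
  · rw [hφ', semiForm_smul_add_smul y e hye hee, hyy]; linear_combination hunit
  · rw [hν, semiForm_smul_add_smul y e hye hee, hyy]; linear_combination hunit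
  · rw [hν, hφ', semiForm_smul_add_smul y e hye hee, hyy]; ring
  · rw [hν, semiForm_add_left, semiForm_smul_left, semiForm_smul_left, semiForm_comm y,
      semiForm_comm e, hvy, hve]
    ring
  · rw [hν', hφ', smul_add, smul_smul, smul_smul, neg_mul, neg_mul]

theorem stmt_8_general (n k : ℕ) (hkn : k ≤ n)
    (h c a₁ a₂ t₀ : ℝ) (hc : 0 < c) (ht₀ : t₀ ∈ Set.Ioo a₁ a₂)
    (g lam r R : ℝ → ℝ)
    (hgdiff : ∀ t ∈ Set.Ioo a₁ a₂, DifferentiableAt ℝ g t)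
    (hgpos : ∀ t ∈ Set.Ioo a₁ a₂, 0 < g t)
    (hg' : ∀ t ∈ Set.Ioo a₁ a₂, deriv g t ≠ 0)
    (hode : ∀ t ∈ Set.Ioo a₁ a₂,
      deriv g t ^ 2 = c - g t ^ 2 * (h + g t ^ (-(n : ℤ))) ^ 2)
    (hlam : ∀ t, lam t = h + g t ^ (-(n : ℤ)))
    (hr : ∀ t, r t = g t / Real.sqrt c)
    (hR : ∀ t, R t = ∫ τ in t₀..t, r τ * lam τ)
    (e : Fin (n + 1) → ℝ)
    (he : ∀ i, e i = if (i : ℕ) = n then 1 else 0) :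
    (∀ t ∈ Set.Ioo a₁ a₂, deriv r t ^ 2 + r t ^ 2 * lam t ^ 2 = 1) ∧
    ∀ y : Fin (n + 1) → ℝ,
      (∀ i : Fin (n + 1), (i : ℕ) = n → y i = 0) →
      semiForm k y y = 1 →
      ∀ φ ν : ℝ → Fin (n + 1) → ℝ,
        (∀ u, φ u = r u • y + R u • e) →
        (∀ u, ν u = (-(r u * lam u)) • y + deriv r u • e) →
        ∀ u ∈ Set.Ioo a₁ a₂,
          semiForm k (deriv φ u) (deriv φ u) = 1 ∧
          semiForm k (ν u) (ν u) = 1 ∧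
          semiForm k (ν u) (deriv φ u) = 0 ∧
          (∀ v : Fin (n + 1) → ℝ,
            (∀ i : Fin (n + 1), (i : ℕ) = n → v i = 0) →
            semiForm k v y = 0 → semiForm k (ν u) v = 0) ∧
          deriv ν u = (-((n : ℝ) * h - ((n : ℝ) - 1) * lam u)) • deriv φ u := by
  have hunit : ∀ t ∈ Ioo a₁ a₂, deriv r t ^ 2 + (r t * lam t) ^ 2 = 1 := fun t ht =>
    deriv_sq_add_sq_eq_one_of_eq_div_sqrt hc hr (hlam t ▸ hode t ht)
  have hrd : ∀ t ∈ Ioo a₁ a₂, DifferentiableAt ℝ r t := fun t ht => by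
    rw [funext hr]; exact (hgdiff t ht).div_const _
  have hr'ne : ∀ t ∈ Ioo a₁ a₂, deriv r t ≠ 0 := fun t ht => by
    rw [deriv_eq_of_eq_div_sqrt hr]; exact div_ne_zero (hg' t ht) (Real.sqrt_pos.2 hc).ne'
  have hρ : ∀ t ∈ Ioo a₁ a₂, HasDerivAt (fun t => r t * lam t)
      ((n * h - (n - 1) * lam t) * deriv r t) t := fun t ht =>
    hasDerivAt_mul_of_eq_div_sqrt n hr hlam (hgdiff t ht) (hgpos t ht).ne'
  refine ⟨fun t ht => by rw [← mul_pow]; exact hunit t ht,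
    fun y hy hyy φ ν hφ hν u hu => ?_⟩
  have hsingle : e = Pi.single (Fin.last n) 1 := funext fun i => by
    simp [he, Pi.single_apply, Fin.ext_iff]
  have hlast : ∀ v, semiForm k v e = v (Fin.last n) := fun v => by
    rw [hsingle, semiForm_single_right, Fin.val_last, if_neg hkn.not_gt]; ring
  have hR' : HasDerivAt R (r u * lam u) u := by
    rw [funext hR]
    exact hasDerivAt_integral_of_continuousAt (fun t ht => (hρ t ht).continuousAt) ht₀ hu
  obtain ⟨hφφ, hνν, hνφ, hνv, hν'⟩ := profileCurve_frame hyy (by rw [hlast, hy _ rfl])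
    (by rw [hlast, he, if_pos (Fin.val_last n)]) (hrd u hu).hasDerivAt hR' (hρ u hu)
    (hasDerivAt_deriv_of_deriv_sq_add_sq hrd hr'ne hunit (hρ u hu) hu) (hunit u hu) hφ hν
  exact ⟨hφφ, hνν, hνφ, fun v hv => hνv v (by rw [hlast, hv _ (Fin.val_last n)]), hν'⟩

/-- Theorem 2.20 of the paper (first family of cmc hypersurfaces of `ℝ_k^{n+1}`).
Coordinate `n+1` of the paper (1-indexed) is index `n` here. -/
theorem stmt_8 (n k : ℕ) (hn : 2 ≤ n) (hkn : k ≤ n)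
    (h c a₁ a₂ t₀ : ℝ) (hc : 0 < c) (ht₀ : t₀ ∈ Set.Ioo a₁ a₂)
    (g lam r R : ℝ → ℝ)
    (hgdiff : ∀ t ∈ Set.Ioo a₁ a₂, DifferentiableAt ℝ g t)
    (hgpos : ∀ t ∈ Set.Ioo a₁ a₂, 0 < g t)
    (hg' : ∀ t ∈ Set.Ioo a₁ a₂, deriv g t ≠ 0)
    (hode : ∀ t ∈ Set.Ioo a₁ a₂,
      deriv g t ^ 2 = c - g t ^ 2 * (h + g t ^ (-(n : ℤ))) ^ 2)
    (hlam : ∀ t, lam t = h + g t ^ (-(n : ℤ)))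
    (hr : ∀ t, r t = g t / Real.sqrt c)
    (hR : ∀ t, R t = ∫ τ in t₀..t, r τ * lam τ)
    (e : Fin (n + 1) → ℝ)
    (he : ∀ i, e i = if (i : ℕ) = n then 1 else 0) :
    (∀ t ∈ Set.Ioo a₁ a₂, deriv r t ^ 2 + r t ^ 2 * lam t ^ 2 = 1) ∧
    ∀ y : Fin (n + 1) → ℝ,
      (∀ i : Fin (n + 1), (i : ℕ) = n → y i = 0) →
      semiForm k y y = 1 →
      ∀ φ ν : ℝ → Fin (n + 1) → ℝ,
        (∀ u, φ u = r u • y + R u • e) →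
        (∀ u, ν u = (-(r u * lam u)) • y + deriv r u • e) →
        ∀ u ∈ Set.Ioo a₁ a₂,
          semiForm k (deriv φ u) (deriv φ u) = 1 ∧
          semiForm k (ν u) (ν u) = 1 ∧
          semiForm k (ν u) (deriv φ u) = 0 ∧
          (∀ v : Fin (n + 1) → ℝ,
            (∀ i : Fin (n + 1), (i : ℕ) = n → v i = 0) →
            semiForm k v y = 0 → semiForm k (ν u) v = 0) ∧
          deriv ν u = (-((n : ℝ) * h - ((n : ℝ) - 1) * lam u)) • deriv φ u :=
  stmt_8_general n k hkn h c a₁ a₂ t₀ hc ht₀ g lam r R hgdiff hgpos hg' hode hlam hr hR e he
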